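/- A real polynomial p of even degree at most 2k is nonnegative on the interval [−1,1] if and only if there exist a sum of squares q of polynomials of degree at most k−1 and a sum of squares s of polynomials of degree at most k such that p(t) = (1−t²)·q(t) + s(t). -/

import Mathlib

/-!
The sums of `g²` and `(1 - X²) g²` with every summand of degree `≤ 2k` form the truncated
quadratic module `quadModule k`, and `quadModule k * quadModule l ⊆ quadModule (k + l)`. A product
of two linear polynomials that are nonnegative on `[-1, 1]` lies in `quadModule 1`, since each is a
nonnegative combination of `1 + X` and `1 - X`. A polynomial of degree `≥ 2` that is nonnegative
on `[-1, 1]` has a quadratic factor in `quadModule 1` whose cofactor is again nonnegative there: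
`(X - z)(X - z̄)` for a nonreal root `z`, `(X - r)²` for a root `r ∈ (-1, 1)` (a local minimum,
hence a double root), or else the product of two real roots outside `(-1, 1)`, suitably signed.
Induction on `k` finishes.
-/

open Polynomial

/-- `q` is a sum of squares of polynomials of degree at most `d`. -/
def IsSOSOfDegLE (d : ℕ) (q : ℝ[X]) : Prop :=
  ∃ (m : ℕ) (s : Fin m → ℝ[X]), (∀ i, (s i).natDegree ≤ d) ∧ q = ∑ i, (s i) ^ 2

open Set
open scoped Pointwise

def weightedSquares (k : ℕ) : Set ℝ[X] :=
  {f | (∃ g, f = g ^ 2 ∨ f = (1 - X ^ 2) * g ^ 2) ∧ f.natDegree ≤ 2 * k}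

noncomputable def quadModule (k : ℕ) : AddSubmonoid ℝ[X] :=
  AddSubmonoid.closure (weightedSquares k)

lemma mul_mem_weightedSquares {k l : ℕ} {f f' : ℝ[X]} (hf : f ∈ weightedSquares k)
    (hf' : f' ∈ weightedSquares l) : f * f' ∈ weightedSquares (k + l) := by
  obtain ⟨⟨g, rfl | rfl⟩, hdeg⟩ := hf <;> obtain ⟨⟨g', rfl | rfl⟩, hdeg'⟩ := hf' <;>
    refine ⟨?_, natDegree_mul_le.trans (by omega)⟩
  · exact ⟨g * g', .inl (by ring)⟩
  · exact ⟨g * g', .inr (by ring)⟩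
  · exact ⟨g * g', .inr (by ring)⟩
  · exact ⟨(1 - X ^ 2) * g * g', .inl (by ring)⟩

lemma quadModule_mono {k l : ℕ} (h : k ≤ l) : quadModule k ≤ quadModule l :=
  AddSubmonoid.closure_mono fun _ hf => ⟨hf.1, hf.2.trans (by omega)⟩

lemma mul_mem_quadModule {k l : ℕ} {p q : ℝ[X]} (hp : p ∈ quadModule k)
    (hq : q ∈ quadModule l) : p * q ∈ quadModule (k + l) := by
  have h := AddSubmonoid.mul_mem_mul hp hq
  rw [quadModule, quadModule, AddSubmonoid.closure_mul_closure] at h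
  refine AddSubmonoid.closure_mono ?_ h
  rintro _ ⟨f, hf, f', hf', rfl⟩
  exact mul_mem_weightedSquares hf hf'

lemma sq_mem_quadModule {k : ℕ} {g : ℝ[X]} (hg : g.natDegree ≤ k) : g ^ 2 ∈ quadModule k :=
  AddSubmonoid.subset_closure ⟨⟨g, .inl rfl⟩, by rw [natDegree_pow]; omega⟩

lemma C_mem_quadModule {k : ℕ} {c : ℝ} (hc : 0 ≤ c) : C c ∈ quadModule k := by
  simpa [← C_pow, Real.sq_sqrt hc] using sq_mem_quadModule ((natDegree_C √c).trans_le k.zero_le)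

lemma one_sub_X_sq_mem_quadModule : 1 - X ^ 2 ∈ quadModule 1 :=
  AddSubmonoid.subset_closure ⟨⟨1, .inr (by ring)⟩, by compute_degree⟩

lemma natDegree_one_sub_X_sq : (1 - X ^ 2 : ℝ[X]).natDegree = 2 := by
  compute_degree!

lemma isSOSOfDegLE_zero (d : ℕ) : IsSOSOfDegLE d 0 :=
  ⟨0, ![], by simp, by simp⟩

lemma isSOSOfDegLE_sq {d : ℕ} {g : ℝ[X]} (hg : g.natDegree ≤ d) : IsSOSOfDegLE d (g ^ 2) :=
  ⟨1, ![g], by simpa using hg, by simp⟩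

lemma IsSOSOfDegLE.add {d : ℕ} {q q' : ℝ[X]} (hq : IsSOSOfDegLE d q) (hq' : IsSOSOfDegLE d q') :
    IsSOSOfDegLE d (q + q') := by
  obtain ⟨m, s, hs, rfl⟩ := hq
  obtain ⟨m', s', hs', rfl⟩ := hq'
  refine ⟨m + m', Fin.append s s', fun i => ?_, by rw [Fin.sum_univ_add]; simp⟩
  induction i using Fin.addCases <;> simp [hs, hs']

lemma IsSOSOfDegLE.eval_nonneg {d : ℕ} {q : ℝ[X]} (hq : IsSOSOfDegLE d q) (t : ℝ) :
    0 ≤ q.eval t := by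
  obtain ⟨m, s, -, rfl⟩ := hq
  rw [eval_finsetSum]
  exact Finset.sum_nonneg fun i _ => by rw [eval_pow]; positivity

lemma exists_sos_of_mem_quadModule {k : ℕ} {p : ℝ[X]} (hp : p ∈ quadModule k) :
    ∃ q s : ℝ[X], IsSOSOfDegLE (k - 1) q ∧ IsSOSOfDegLE k s ∧ p = (1 - X ^ 2) * q + s := by
  induction hp using AddSubmonoid.closure_induction with
  | mem f hf =>
    obtain ⟨⟨g, rfl | rfl⟩, hdeg⟩ := hf
    · rw [natDegree_pow] at hdeg
      exact ⟨0, g ^ 2, isSOSOfDegLE_zero _, isSOSOfDegLE_sq (by omega), by ring⟩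
    · refine ⟨g ^ 2, 0, isSOSOfDegLE_sq ?_, isSOSOfDegLE_zero _, by ring⟩
      rcases eq_or_ne g 0 with rfl | hg
      · simp
      · rw [natDegree_mul (ne_zero_of_natDegree_gt (n := 0) (by rw [natDegree_one_sub_X_sq]; omega))
          (pow_ne_zero 2 hg), natDegree_pow, natDegree_one_sub_X_sq] at hdeg
        omega
  | zero => exact ⟨0, 0, isSOSOfDegLE_zero _, isSOSOfDegLE_zero _, by ring⟩
  | add p p' _ _ ih ih' =>
    obtain ⟨q, s, hq, hs, rfl⟩ := ih
    obtain ⟨q', s', hq', hs', rfl⟩ := ih'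
    exact ⟨q + q', s + s', hq.add hq', hs.add hs', by ring⟩

lemma eval_one_sub_X_sq_mul_add_nonneg {q s : ℝ[X]} (hq : ∀ t, 0 ≤ q.eval t)
    (hs : ∀ t, 0 ≤ s.eval t) {t : ℝ} (ht : t ∈ Icc (-1 : ℝ) 1) :
    0 ≤ ((1 - X ^ 2) * q + s).eval t := by
  have h : 0 ≤ 1 - t ^ 2 := by nlinarith [ht.1, ht.2]
  simpa using add_nonneg (mul_nonneg h (hq t)) (hs t)

lemma eval_nonneg_of_mem_quadModule {k : ℕ} {p : ℝ[X]} (hp : p ∈ quadModule k) {t : ℝ}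
    (ht : t ∈ Icc (-1 : ℝ) 1) : 0 ≤ p.eval t := by
  obtain ⟨q, s, hq, hs, rfl⟩ := exists_sos_of_mem_quadModule hp
  exact eval_one_sub_X_sq_mul_add_nonneg hq.eval_nonneg hs.eval_nonneg ht

lemma eq_C_mul_one_add_X_add_C_mul_one_sub_X {ℓ : ℝ[X]} (hℓ : ℓ.natDegree ≤ 1) :
    ℓ = C (ℓ.eval 1 / 2) * (1 + X) + C (ℓ.eval (-1) / 2) * (1 - X) := by
  refine Polynomial.funext fun t => ?_
  rw [eq_X_add_C_of_natDegree_le_one hℓ]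
  simp only [eval_add, eval_mul, eval_sub, eval_C, eval_X, eval_one]
  ring

lemma mul_mem_quadModule_one_of_natDegree_le_one {ℓ ℓ' : ℝ[X]} (hℓ : ℓ.natDegree ≤ 1)
    (hℓ' : ℓ'.natDegree ≤ 1) (hℓ₀ : ∀ t ∈ Icc (-1 : ℝ) 1, 0 ≤ ℓ.eval t)
    (hℓ'₀ : ∀ t ∈ Icc (-1 : ℝ) 1, 0 ≤ ℓ'.eval t) : ℓ * ℓ' ∈ quadModule 1 := by
  set a := ℓ.eval 1 / 2
  set b := ℓ.eval (-1) / 2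
  set a' := ℓ'.eval 1 / 2
  set b' := ℓ'.eval (-1) / 2
  have ha : 0 ≤ a := by have := hℓ₀ 1 (by norm_num); positivity
  have hb : 0 ≤ b := by have := hℓ₀ (-1) (by norm_num); positivity
  have ha' : 0 ≤ a' := by have := hℓ'₀ 1 (by norm_num); positivity
  have hb' : 0 ≤ b' := by have := hℓ'₀ (-1) (by norm_num); positivity
  have key : ℓ * ℓ' = C (a * a') * (1 + X) ^ 2 + C (b * b') * (1 - X) ^ 2
      + C (a * b' + b * a') * (1 - X ^ 2) := by
    rw [eq_C_mul_one_add_X_add_C_mul_one_sub_X hℓ, eq_C_mul_one_add_X_add_C_mul_one_sub_X hℓ']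
    simp only [map_add, map_mul]
    ring
  have hlin : ∀ c, 0 ≤ c → ∀ g ∈ quadModule 1, C c * g ∈ quadModule 1 := fun c hc g hg =>
    by simpa using mul_mem_quadModule (C_mem_quadModule (k := 0) hc) hg
  rw [key]
  refine add_mem (add_mem ?_ ?_) ?_
  · exact hlin _ (by positivity) _ (sq_mem_quadModule (by compute_degree!))
  · exact hlin _ (by positivity) _ (sq_mem_quadModule (by compute_degree!))
  · exact hlin _ (by positivity) _ one_sub_X_sq_mem_quadModule

lemma eval_nonneg_of_eval_mul_nonneg {a b : ℝ} (hab : a < b) {g h : ℝ[X]} (hg : g ≠ 0)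
    (hg₀ : ∀ t ∈ Icc a b, 0 ≤ g.eval t) (hgh : ∀ t ∈ Icc a b, 0 ≤ (g * h).eval t) :
    ∀ t ∈ Icc a b, 0 ≤ h.eval t := by
  have hdense : Dense ({t | g.IsRoot t}ᶜ) := by
    rw [compl_eq_univ_sdiff]
    exact dense_univ.sdiff_finite (finite_setOfPred_isRoot hg)
  have hsub : Ioo a b ∩ {t | g.IsRoot t}ᶜ ⊆ {t | 0 ≤ h.eval t} := by
    rintro t ⟨ht, hroot⟩
    have hpos : 0 < g.eval t := (hg₀ t (Ioo_subset_Icc_self ht)).lt_of_ne' hroot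
    exact nonneg_of_mul_nonneg_right (by simpa using hgh t (Ioo_subset_Icc_self ht)) hpos
  calc Icc a b = closure (Ioo a b) := (closure_Ioo hab.ne).symm
    _ ⊆ closure (Ioo a b ∩ {t | g.IsRoot t}ᶜ) :=
      closure_minimal (hdense.open_subset_closure_inter isOpen_Ioo) isClosed_closure
    _ ⊆ {t | 0 ≤ h.eval t} := closure_minimal hsub (isClosed_le continuous_const h.continuous)

lemma X_sub_C_sq_dvd_of_isLocalMin {p : ℝ[X]} {r : ℝ} (hr : p.IsRoot r)
    (hmin : IsLocalMin (fun t => p.eval t) r) : (X - C r) ^ 2 ∣ p := by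
  rcases eq_or_ne p 0 with rfl | hp
  · exact dvd_zero _
  rw [← le_rootMultiplicity_iff hp, Nat.succ_le_iff, one_lt_rootMultiplicity_iff_isRoot hp]
  exact ⟨hr, by simpa [Polynomial.deriv] using hmin.deriv_eq_zero⟩

lemma exists_isRoot_of_forall_im_eq_zero {p : ℝ[X]} (hp : 0 < p.degree)
    (hreal : ∀ z : ℂ, aeval z p = 0 → z.im = 0) : ∃ r : ℝ, p.IsRoot r := by
  obtain ⟨z, hz⟩ := IsAlgClosed.exists_aeval_eq_zero ℂ p hp.ne'
  refine ⟨z.re, ?_⟩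
  have hzr : ((z.re : ℝ) : ℂ) = z := Complex.ext rfl (by simp [hreal z hz])
  rw [← hzr, ← Complex.coe_algebraMap, aeval_algebraMap_apply, coe_aeval_eq_eval] at hz
  simpa using hz

lemma exists_eq_X_sub_C_mul_X_sub_C_mul {p : ℝ[X]} (hdeg : 2 ≤ p.natDegree)
    (hreal : ∀ z : ℂ, aeval z p = 0 → z.im = 0) :
    ∃ r r₁ : ℝ, ∃ p₂, p = (X - C r) * (X - C r₁) * p₂ := by
  obtain ⟨r, hr⟩ := exists_isRoot_of_forall_im_eq_zero
    (natDegree_pos_iff_degree_pos.mp (by omega)) hreal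
  obtain ⟨p₁, rfl⟩ := dvd_iff_isRoot.mpr hr
  have hp₁ : p₁ ≠ 0 := by rintro rfl; simp at hdeg
  rw [natDegree_mul (X_sub_C_ne_zero r) hp₁, natDegree_X_sub_C] at hdeg
  obtain ⟨r₁, hr₁⟩ := exists_isRoot_of_forall_im_eq_zero (p := p₁)
    (natDegree_pos_iff_degree_pos.mp (by omega)) fun z hz => hreal z (by simp [hz])
  obtain ⟨p₂, rfl⟩ := dvd_iff_isRoot.mpr hr₁
  exact ⟨r, r₁, p₂, by ring⟩

lemma X_sq_sub_C_mul_X_add_C_mem_quadModule_one (z : ℂ) :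
    X ^ 2 - C (2 * z.re) * X + C (‖z‖ ^ 2) ∈ quadModule 1 := by
  have hsum : X ^ 2 - C (2 * z.re) * X + C (‖z‖ ^ 2) = (X - C z.re) ^ 2 + C z.im ^ 2 := by
    rw [Complex.sq_norm, Complex.normSq_apply]
    simp only [map_add, map_mul, map_ofNat]
    ring
  rw [hsum]
  exact add_mem (sq_mem_quadModule (by compute_degree))
    (sq_mem_quadModule ((natDegree_C _).trans_le zero_le_one))

-- The sign-normalized multiple of `X - s`: `s (s - t) ≥ s² - |s| ≥ 0` when `|t| ≤ 1 ≤ |s|`.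
lemma eval_C_mul_C_sub_X_nonneg {s t : ℝ} (hs : s ∉ Ioo (-1 : ℝ) 1) (ht : t ∈ Icc (-1 : ℝ) 1) :
    0 ≤ (C s * (C s - X)).eval t := by
  simp only [mem_Ioo, not_and_or, not_lt] at hs
  simp only [eval_mul, eval_sub, eval_C, eval_X]
  rcases hs with hs | hs <;> nlinarith [ht.1, ht.2]

lemma exists_mem_quadModule_one_dvd {p : ℝ[X]} (hp : ∀ t ∈ Icc (-1 : ℝ) 1, 0 ≤ p.eval t)
    (hdeg : 2 ≤ p.natDegree) : ∃ g ∈ quadModule 1, g.natDegree = 2 ∧ g ∣ p := by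
  by_cases hnonreal : ∃ z : ℂ, aeval z p = 0 ∧ z.im ≠ 0
  · obtain ⟨z, hz, him⟩ := hnonreal
    exact ⟨_, X_sq_sub_C_mul_X_add_C_mem_quadModule_one z, by compute_degree!,
      quadratic_dvd_of_aeval_eq_zero_im_ne_zero p hz him⟩
  by_cases hinterior : ∃ r ∈ Ioo (-1 : ℝ) 1, p.IsRoot r
  · obtain ⟨r, hr, hroot⟩ := hinterior
    refine ⟨(X - C r) ^ 2, sq_mem_quadModule (natDegree_X_sub_C r).le, by compute_degree!,
      X_sub_C_sq_dvd_of_isLocalMin hroot ?_⟩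
    filter_upwards [Icc_mem_nhds hr.1 hr.2] with t ht
    simpa [hroot.eq_zero] using hp t ht
  push Not at hnonreal hinterior
  obtain ⟨r, r₁, p₂, rfl⟩ := exists_eq_X_sub_C_mul_X_sub_C_mul hdeg hnonreal
  have hr : r ∉ Ioo (-1 : ℝ) 1 := fun h => hinterior r h (by simp)
  have hr₁ : r₁ ∉ Ioo (-1 : ℝ) 1 := fun h => hinterior r₁ h (by simp)
  have hrr₁ : r * r₁ ≠ 0 :=
    mul_ne_zero (by rintro rfl; norm_num at hr) (by rintro rfl; norm_num at hr₁)
  have hg : C r * (C r - X) * (C r₁ * (C r₁ - X)) = C (r * r₁) * ((X - C r) * (X - C r₁)) := by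
    simp only [map_mul]
    ring
  refine ⟨_, mul_mem_quadModule_one_of_natDegree_le_one (by compute_degree) (by compute_degree)
      (fun _ => eval_C_mul_C_sub_X_nonneg hr) (fun _ => eval_C_mul_C_sub_X_nonneg hr₁), ?_, ?_⟩
  · rw [hg]
    compute_degree!
    exact mul_ne_zero_iff.mp hrr₁
  · rw [hg, C_mul_dvd hrr₁]
    exact dvd_mul_right _ _

lemma mem_quadModule_of_eval_nonneg (k : ℕ) {p : ℝ[X]} (hdeg : p.natDegree ≤ 2 * k)
    (hp : ∀ t ∈ Icc (-1 : ℝ) 1, 0 ≤ p.eval t) : p ∈ quadModule k := by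
  induction k generalizing p with
  | zero =>
    rw [eq_C_of_natDegree_le_zero (by omega : p.natDegree ≤ 0), coeff_zero_eq_eval_zero]
    exact C_mem_quadModule (hp 0 (by norm_num))
  | succ k ih =>
    by_cases hlin : p.natDegree ≤ 1
    · have h := mul_mem_quadModule_one_of_natDegree_le_one hlin
        (natDegree_one.trans_le zero_le_one) hp (fun _ _ => by simp)
      rw [mul_one] at h
      exact quadModule_mono (by omega) h
    obtain ⟨g, hg, hg2, h, rfl⟩ := exists_mem_quadModule_one_dvd hp (by omega)
    have hg0 : g ≠ 0 := ne_zero_of_natDegree_gt (n := 1) (by omega)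
    have hh0 : h ≠ 0 := by rintro rfl; simp at hlin
    rw [natDegree_mul hg0 hh0, hg2] at hdeg
    have hh : ∀ t ∈ Icc (-1 : ℝ) 1, 0 ≤ h.eval t := eval_nonneg_of_eval_mul_nonneg
      (by norm_num) hg0 (fun t ht => eval_nonneg_of_mem_quadModule hg ht) hp
    rw [add_comm k]
    exact mul_mem_quadModule hg (ih (by omega) hh)

theorem lukacs_even (k : ℕ) (p : ℝ[X]) (hdeg : p.natDegree ≤ 2 * k) :
    (∀ t ∈ Set.Icc (-1 : ℝ) 1, 0 ≤ p.eval t) ↔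
      ∃ q s : ℝ[X], IsSOSOfDegLE (k - 1) q ∧ IsSOSOfDegLE k s ∧
        p = (1 - X ^ 2) * q + s := by
  refine ⟨fun hp => exists_sos_of_mem_quadModule (mem_quadModule_of_eval_nonneg k hdeg hp), ?_⟩
  rintro ⟨q, s, hq, hs, rfl⟩ t ht
  exact eval_one_sub_X_sq_mul_add_nonneg hq.eval_nonneg hs.eval_nonneg ht
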